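/- arXiv:q-alg/9509023 — 2 statements merged into one kernel-verified Lean document; each statement's English description precedes it below -/
import Mathlib

section
/- If (H, R) is a quasitriangular Hopf algebra and u = ∑ (S R⁽²⁾) R⁽¹⁾ (where R = ∑ R⁽¹⁾ ⊗ R⁽²⁾), then u is invertible with inverse u⁻¹ = ∑ R⁽²⁾ S²(R⁽¹⁾), and S²(h) = u h u⁻¹ for all h ∈ H. -/
/-!
The conditions `(Δ ⊗ id) R = R₁₃ R₂₃` and `(id ⊗ Δ) R⁻¹ = R₁₂⁻¹ R₁₃⁻¹` say that `f ↦ (f ⊗ id) R`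
and `f ↦ (id ⊗ f) R⁻¹` are multiplicative for the convolution product on `End H`. As `S` is the
convolution inverse of `id`, this gives `(S ⊗ id) R = R⁻¹` and `(id ⊗ S) R⁻¹ = R`, hence
`(S ⊗ S) R = R`.

Quasi-cocommutativity `R Δ(h) = Δᵒᵖ(h) R`, pushed through `X ↦ ∑ S(X⁽²⁾) X⁽¹⁾`, gives
`∑ S(h₍₂₎) u h₍₁₎ = ε(h) u`, and a coassociativity computation turns this into `u h = S²(h) u`.
With `v = ∑ R⁽²⁾ S²(R⁽¹⁾)`, the identity `v u = 1` is `∑ S(R⁽²⁾) u S(R⁽¹⁾) = 1` (the element `u`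
built from `R R⁻¹ = 1`) rewritten with `u h = S²(h) u` and `(S ⊗ S) R = R`; finally
`u v = S²(v) S²(u) = S²(v u) = 1`, since `(S ⊗ S) R = R` forces `S²(u) = u`.
-/

open TensorProduct

namespace Stmt3

variable {k H : Type} [Field k] [Ring H] [HopfAlgebra k H]

noncomputable def ι12 : (H ⊗[k] H) →ₐ[k] H ⊗[k] (H ⊗[k] H) :=
  Algebra.TensorProduct.map (AlgHom.id k H) Algebra.TensorProduct.includeLeft

noncomputable def ι13 : (H ⊗[k] H) →ₐ[k] H ⊗[k] (H ⊗[k] H) :=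
  Algebra.TensorProduct.map (AlgHom.id k H) Algebra.TensorProduct.includeRight

noncomputable def ι23 : (H ⊗[k] H) →ₐ[k] H ⊗[k] (H ⊗[k] H) :=
  Algebra.TensorProduct.includeRight

/-- `u = ∑ (S R⁽²⁾) R⁽¹⁾`, i.e. multiplication applied to `(S ⊗ id)(τ R)`. -/
noncomputable def uElt (R : H ⊗[k] H) : H :=
  (LinearMap.mul' k H)
    ((TensorProduct.map (HopfAlgebra.antipode (R := k) (A := H)) LinearMap.id)
      ((TensorProduct.comm k H H) R))

/-- `u' = ∑ R⁽²⁾ S²(R⁽¹⁾)`, the claimed inverse of `u`. -/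
noncomputable def uInvElt (R : H ⊗[k] H) : H :=
  (LinearMap.mul' k H)
    ((TensorProduct.map LinearMap.id
        ((HopfAlgebra.antipode (R := k) (A := H)) ∘ₗ (HopfAlgebra.antipode (R := k) (A := H))))
      ((TensorProduct.comm k H H) R))

open WithConv

local notation "S" => HopfAlgebra.antipode (R := k) (A := H)
local notation "Δ" => Coalgebra.comul (R := k) (A := H)
local notation "ε" => Coalgebra.counit (R := k) (A := H)
local notation "μ" => LinearMap.mul' k H

@[simp] lemma ι12_tmul (x y : H) : ι12 (k := k) (x ⊗ₜ y) = x ⊗ₜ (y ⊗ₜ (1 : H)) := rfl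

@[simp] lemma ι13_tmul (x y : H) : ι13 (k := k) (x ⊗ₜ y) = x ⊗ₜ ((1 : H) ⊗ₜ y) := rfl

@[simp] lemma ι23_tmul (x y : H) : ι23 (k := k) (x ⊗ₜ y) = (1 : H) ⊗ₜ (x ⊗ₜ y) := rfl

@[simp] lemma uElt_tmul (x y : H) : uElt (k := k) (x ⊗ₜ y) = S y * x := by simp [uElt]

@[simp] lemma uElt_zero : uElt (0 : H ⊗[k] H) = 0 := by simp [uElt]

@[simp] lemma uElt_add (X Y : H ⊗[k] H) : uElt (X + Y) = uElt X + uElt Y := by simp [uElt]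

@[simp] lemma uInvElt_tmul (x y : H) : uInvElt (k := k) (x ⊗ₜ y) = y * S (S x) := by
  simp [uInvElt]

@[simp] lemma uInvElt_zero : uInvElt (0 : H ⊗[k] H) = 0 := by simp [uInvElt]

@[simp] lemma uInvElt_add (X Y : H ⊗[k] H) : uInvElt (X + Y) = uInvElt X + uInvElt Y := by
  simp [uInvElt]

lemma antipode_antipode_mul (a b : H) : S (S (a * b)) = S (S a) * S (S b) := by
  simp only [HopfAlgebra.antipode_mul_antidistrib]

lemma map_one_eq_one_of_map_mul {M N : Type*} [Monoid M] [Monoid N] {φ : M → N}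
    (hφ : ∀ a b, φ (a * b) = φ a * φ b) {x : M} {y : N} (hx : φ x * y = 1) : φ 1 = 1 :=
  calc φ 1 = φ 1 * (φ x * y) := by rw [hx, mul_one]
    _ = 1 := by rw [← mul_assoc, ← hφ, one_mul, hx]

section RMatrix

variable {R Rinv : H ⊗[k] H}

lemma rTensor_convMul_of_rTensor_comul {X : H ⊗[k] H}
    (hX : TensorProduct.assoc k H H H (LinearMap.rTensor H Δ X) = ι13 X * ι23 X)
    (f g : WithConv (H →ₗ[k] H)) :
    (f * g).ofConv.rTensor H X = f.ofConv.rTensor H X * g.ofConv.rTensor H X := by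
  have h13_23 (Y Z : H ⊗[k] H) :
      LinearMap.rTensor H μ (LinearMap.rTensor H (TensorProduct.map f.ofConv g.ofConv)
        ((TensorProduct.assoc k H H H).symm (ι13 Y * ι23 Z))) =
        f.ofConv.rTensor H Y * g.ofConv.rTensor H Z := by
    induction Y with
    | zero => simp
    | add Y₁ Y₂ h₁ h₂ => simp only [add_mul, map_add, h₁, h₂]
    | tmul a b =>
      induction Z with
      | zero => simp
      | add Z₁ Z₂ h₁ h₂ => simp only [mul_add, map_add, h₁, h₂]
      | tmul c d => simp [Algebra.TensorProduct.tmul_mul_tmul]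
  rw [LinearMap.convMul_def, ofConv_toConv, LinearMap.rTensor_comp, LinearMap.rTensor_comp,
    LinearMap.comp_apply, LinearMap.comp_apply,
    ← (TensorProduct.assoc k H H H).symm_apply_apply (LinearMap.rTensor H Δ X), hX, h13_23]

lemma lTensor_convMul_of_lTensor_comul {X : H ⊗[k] H}
    (hX : LinearMap.lTensor H Δ X = ι12 X * ι13 X) (f g : WithConv (H →ₗ[k] H)) :
    (f * g).ofConv.lTensor H X = f.ofConv.lTensor H X * g.ofConv.lTensor H X := by
  have h12_13 (Y Z : H ⊗[k] H) :
      LinearMap.lTensor H μ (LinearMap.lTensor H (TensorProduct.map f.ofConv g.ofConv)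
        (ι12 Y * ι13 Z)) = f.ofConv.lTensor H Y * g.ofConv.lTensor H Z := by
    induction Y with
    | zero => simp
    | add Y₁ Y₂ h₁ h₂ => simp only [add_mul, map_add, h₁, h₂]
    | tmul a b =>
      induction Z with
      | zero => simp
      | add Z₁ Z₂ h₁ h₂ => simp only [mul_add, map_add, h₁, h₂]
      | tmul c d => simp [Algebra.TensorProduct.tmul_mul_tmul]
  rw [LinearMap.convMul_def, ofConv_toConv, LinearMap.lTensor_comp, LinearMap.lTensor_comp,
    LinearMap.comp_apply, LinearMap.comp_apply, hX, h12_13]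

lemma rTensor_antipode_eq_inv (hR : R * Rinv = 1)
    (hqua1 : TensorProduct.assoc k H H H (LinearMap.rTensor H Δ R) = ι13 R * ι23 R) :
    LinearMap.rTensor H S R = Rinv := by
  have hmul := rTensor_convMul_of_rTensor_comul hqua1
  have hid : (toConv (LinearMap.id : H →ₗ[k] H)).ofConv.rTensor H R = R :=
    LinearMap.rTensor_id_apply _ _ R
  have hone : (1 : WithConv (H →ₗ[k] H)).ofConv.rTensor H R = 1 :=
    map_one_eq_one_of_map_mul (φ := fun f ↦ f.ofConv.rTensor H R) hmul
      (x := toConv LinearMap.id) (by rw [hid, hR])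
  have hS := hmul (toConv S) (toConv LinearMap.id)
  rw [LinearMap.antipode_mul_id, hone, hid] at hS
  exact left_inv_eq_right_inv hS.symm hR

lemma lTensor_comul_inv (hR : R * Rinv = 1) (hR' : Rinv * R = 1)
    (hqua1' : LinearMap.lTensor H Δ R = ι13 R * ι12 R) :
    LinearMap.lTensor H Δ Rinv = ι12 Rinv * ι13 Rinv := by
  let Δ₂ : H ⊗[k] H →ₐ[k] H ⊗[k] (H ⊗[k] H) :=
    Algebra.TensorProduct.map (AlgHom.id k H) (Bialgebra.comulAlgHom k H)
  have hΔ₂ (X : H ⊗[k] H) : Δ₂ X = LinearMap.lTensor H Δ X := by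
    induction X with
    | zero => simp
    | add X₁ X₂ h₁ h₂ => simp only [map_add, h₁, h₂]
    | tmul a b => rfl
  refine (left_inv_eq_right_inv (a := LinearMap.lTensor H Δ R) ?_ ?_).symm
  · rw [hqua1', mul_assoc, ← mul_assoc (ι13 Rinv), ← map_mul, hR', map_one, one_mul, ← map_mul,
      hR', map_one]
  · rw [← hΔ₂, ← hΔ₂, ← map_mul, hR, map_one]

lemma lTensor_antipode_inv_eq (hR : R * Rinv = 1) (hR' : Rinv * R = 1)
    (hqua1' : LinearMap.lTensor H Δ R = ι13 R * ι12 R) :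
    LinearMap.lTensor H S Rinv = R := by
  have hmul := lTensor_convMul_of_lTensor_comul (lTensor_comul_inv hR hR' hqua1')
  have hid : (toConv (LinearMap.id : H →ₗ[k] H)).ofConv.lTensor H Rinv = Rinv :=
    LinearMap.lTensor_id_apply _ _ Rinv
  have hone : (1 : WithConv (H →ₗ[k] H)).ofConv.lTensor H Rinv = 1 :=
    map_one_eq_one_of_map_mul (φ := fun f ↦ f.ofConv.lTensor H Rinv) hmul
      (x := toConv LinearMap.id) (by rw [hid, hR'])
  have hS := hmul (toConv S) (toConv LinearMap.id)
  rw [LinearMap.antipode_mul_id, hone, hid] at hS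
  exact left_inv_eq_right_inv hS.symm hR'

lemma map_antipode_antipode_eq (hR : R * Rinv = 1) (hR' : Rinv * R = 1)
    (hqua1 : TensorProduct.assoc k H H H (LinearMap.rTensor H Δ R) = ι13 R * ι23 R)
    (hqua1' : LinearMap.lTensor H Δ R = ι13 R * ι12 R) :
    TensorProduct.map S S R = R := by
  rw [← LinearMap.lTensor_comp_rTensor, LinearMap.comp_apply, rTensor_antipode_eq_inv hR hqua1,
    lTensor_antipode_inv_eq hR hR' hqua1']

end RMatrix

/-- `antipodeSandwich c X = ∑ S(X⁽²⁾) c X⁽¹⁾`, so that `uElt X = antipodeSandwich 1 X`. -/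
noncomputable def antipodeSandwich (c : H) : H ⊗[k] H →ₗ[k] H :=
  μ ∘ₗ TensorProduct.map S (LinearMap.mulLeft k c) ∘ₗ (TensorProduct.comm k H H).toLinearMap

@[simp] lemma antipodeSandwich_tmul (c a b : H) :
    antipodeSandwich c (a ⊗ₜ[k] b) = S b * c * a := by
  simp [antipodeSandwich, mul_assoc]

lemma antipodeSandwich_algebraMap (r : k) (X : H ⊗[k] H) :
    antipodeSandwich (algebraMap k H r) X = r • uElt X := by
  induction X with
  | zero => simp
  | add X₁ X₂ h₁ h₂ => simp only [map_add, uElt_add, h₁, h₂, smul_add]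
  | tmul a b => simp [Algebra.algebraMap_eq_smul_one]

lemma uElt_mul (X Y : H ⊗[k] H) : uElt (X * Y) = antipodeSandwich (uElt X) Y := by
  induction Y with
  | zero => simp
  | add Y₁ Y₂ h₁ h₂ => simp only [mul_add, uElt_add, map_add, h₁, h₂]
  | tmul c d =>
    rw [antipodeSandwich_tmul]
    induction X with
    | zero => simp
    | add X₁ X₂ h₁ h₂ => simp only [add_mul, uElt_add, h₁, h₂, mul_add]
    | tmul a b =>
      simp [Algebra.TensorProduct.tmul_mul_tmul, HopfAlgebra.antipode_mul_antidistrib, mul_assoc]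

lemma uElt_comm_comul (h : H) :
    uElt (TensorProduct.comm k H H (Δ h)) = algebraMap k H (ε h) := by
  rw [uElt, TensorProduct.comm_comm, ← LinearMap.rTensor_def,
    HopfAlgebra.mul_antipode_rTensor_comul_apply]

lemma antipodeSandwich_uElt_comul {R Rinv : H ⊗[k] H} (hR' : Rinv * R = 1)
    (hqua2 : ∀ h : H, TensorProduct.comm k H H (Δ h) = R * Δ h * Rinv) (h : H) :
    antipodeSandwich (uElt R) (Δ h) = ε h • uElt R := by
  have hRΔ : R * Δ h = TensorProduct.comm k H H (Δ h) * R := by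
    rw [hqua2, mul_assoc, mul_assoc, hR', mul_one]
  rw [← uElt_mul, hRΔ, uElt_mul, uElt_comm_comul, antipodeSandwich_algebraMap]

/-- Both sides are `G` applied to the two sides of coassociativity, where
`G (p ⊗ q ⊗ r) = S(q S(r)) c p = S²(r) S(q) c p`: contracting `q ⊗ r` with the antipode axiom
gives `c h`, contracting `p ⊗ q` with the hypothesis gives `S²(h) c`. -/
lemma mul_eq_antipode_antipode_mul {c : H}
    (hc : ∀ h : H, antipodeSandwich c (Δ h) = ε h • c) (h : H) :
    c * h = S (S h) * c := by
  let G : H ⊗[k] (H ⊗[k] H) →ₗ[k] H :=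
    antipodeSandwich c ∘ₗ LinearMap.lTensor H (μ ∘ₗ LinearMap.lTensor H S)
  have hG_assoc (Z : H ⊗[k] H) (r : H) :
      G (TensorProduct.assoc k H H H (Z ⊗ₜ r)) = S (S r) * antipodeSandwich c Z := by
    induction Z with
    | zero => simp
    | add Z₁ Z₂ h₁ h₂ => simp only [add_tmul, map_add, h₁, h₂, mul_add]
    | tmul p q => simp [G, HopfAlgebra.antipode_mul_antidistrib, mul_assoc]
  have hG_rTensor (W : H ⊗[k] H) :
      G (TensorProduct.assoc k H H H (LinearMap.rTensor H Δ W)) =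
        S (S (TensorProduct.lid k H (LinearMap.rTensor H ε W))) * c := by
    induction W with
    | zero => simp
    | add W₁ W₂ h₁ h₂ => simp only [map_add, h₁, h₂, add_mul]
    | tmul x y => simp [hG_assoc, hc]
  have hG_lTensor : G (LinearMap.lTensor H Δ (Δ h)) = c * h := by
    have hcontract : LinearMap.lTensor H (μ ∘ₗ LinearMap.lTensor H S)
        (LinearMap.lTensor H Δ (Δ h)) = h ⊗ₜ 1 := by
      rw [← LinearMap.lTensor_comp_apply, LinearMap.comp_assoc,
        HopfAlgebra.mul_antipode_lTensor_comul, LinearMap.lTensor_comp_apply,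
        Coalgebra.lTensor_counit_comul]
      simp
    simp [G, hcontract]
  rw [← hG_lTensor, ← Coalgebra.coassoc_apply, hG_rTensor, Coalgebra.rTensor_counit_comul]
  simp

lemma antipodeSandwich_rTensor_antipode {u : H} (hu : ∀ h : H, u * h = S (S h) * u)
    (X : H ⊗[k] H) :
    antipodeSandwich u (LinearMap.rTensor H S X) = uInvElt (TensorProduct.map S S X) * u := by
  induction X with
  | zero => simp
  | add X₁ X₂ h₁ h₂ => simp only [map_add, h₁, h₂, uInvElt_add, add_mul]
  | tmul a b => simp [mul_assoc, hu]

lemma antipode_antipode_uElt (X : H ⊗[k] H) :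
    S (S (uElt X)) = uElt (TensorProduct.map S S (TensorProduct.map S S X)) := by
  induction X with
  | zero => simp
  | add X₁ X₂ h₁ h₂ => simp only [map_add, h₁, h₂, uElt_add]
  | tmul a b => simp [HopfAlgebra.antipode_mul_antidistrib]

/-- for a quasitriangular Hopf algebra `(H, R)`, the element
`u = ∑ (S R⁽²⁾) R⁽¹⁾` is invertible with inverse `∑ R⁽²⁾ S²(R⁽¹⁾)`, and `S²(h) = u h u⁻¹`. -/
theorem u_invertible_and_implements_S_squared (R Rinv : H ⊗[k] H)
    (hR : R * Rinv = 1) (hR' : Rinv * R = 1)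
    (hqua1 : (TensorProduct.assoc k H H H) ((Coalgebra.comul (R := k)).rTensor H R) =
      ι13 (k := k) (H := H) R * ι23 (k := k) (H := H) R)
    (hqua1' : (Coalgebra.comul (R := k)).lTensor H R =
      ι13 (k := k) (H := H) R * ι12 (k := k) (H := H) R)
    (hqua2 : ∀ h : H, (TensorProduct.comm k H H) (Coalgebra.comul (R := k) h) =
      R * Coalgebra.comul (R := k) h * Rinv) :
    uElt (k := k) R * uInvElt (k := k) R = 1 ∧
      uInvElt (k := k) R * uElt (k := k) R = 1 ∧
      ∀ h : H, (HopfAlgebra.antipode (R := k) (A := H))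
          ((HopfAlgebra.antipode (R := k) (A := H)) h) =
        uElt (k := k) R * h * uInvElt (k := k) R := by
  have hSS : TensorProduct.map S S R = R := map_antipode_antipode_eq hR hR' hqua1 hqua1'
  have hu : ∀ h, uElt R * h = S (S h) * uElt R :=
    mul_eq_antipode_antipode_mul (antipodeSandwich_uElt_comul hR' hqua2)
  have hvu : uInvElt R * uElt R = 1 :=
    calc uInvElt R * uElt R = antipodeSandwich (uElt R) (LinearMap.rTensor H S R) := by
          rw [antipodeSandwich_rTensor_antipode hu, hSS]
      _ = 1 := by
          rw [rTensor_antipode_eq_inv hR hqua1, ← uElt_mul, hR, Algebra.TensorProduct.one_def,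
            uElt_tmul, HopfAlgebra.antipode_one, one_mul]
  have huv : uElt R * uInvElt R = 1 :=
    calc uElt R * uInvElt R = S (S (uInvElt R)) * S (S (uElt R)) := by
          rw [hu, antipode_antipode_uElt, hSS, hSS]
      _ = 1 := by
          rw [← antipode_antipode_mul, hvu, HopfAlgebra.antipode_one, HopfAlgebra.antipode_one]
  exact ⟨huv, hvu, fun h ↦ by rw [hu, mul_assoc, huv, mul_one]⟩

end Stmt3
end

section
/- Let R ∈ Mₙ(k) ⊗ Mₙ(k) be an invertible solution of the quantum Yang–Baxter equation R₁₂R₁₃R₂₃ = R₂₃R₁₃R₁₂. Then the matrix bialgebra A(R) with generators tⁱⱼ and relations R t₁ t₂ = t₂ t₁ R admits two algebra representations ρ⁺, ρ⁻ : A(R) → Mₙ(k) defined on generators by ρ⁺(tⁱⱼ)ᵏₗ = Rⁱⱼᵏₗ and ρ⁻(tⁱⱼ)ᵏₗ = (R⁻¹)ᵏₗⁱⱼ. -/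
namespace Stmt10

variable (k : Type) [Field k] (n : ℕ)

/-- `n² × n²` matrices, i.e. elements of `Mₙ(k) ⊗ Mₙ(k)`. -/
abbrev M2 (k : Type) [Field k] (n : ℕ) := Matrix (Fin n × Fin n) (Fin n × Fin n) k

/-- Matrices acting on a triple tensor product `kⁿ ⊗ kⁿ ⊗ kⁿ`. -/
abbrev M3 (k : Type) [Field k] (n : ℕ) :=
  Matrix (Fin n × Fin n × Fin n) (Fin n × Fin n × Fin n) k

/-- `R₁₂ = R ⊗ id`. -/
def lift12 (R : M2 k n) : M3 k n := fun p q =>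
  R (p.1, p.2.1) (q.1, q.2.1) * (if p.2.2 = q.2.2 then 1 else 0)

/-- `R₁₃`, acting in the first and third factors. -/
def lift13 (R : M2 k n) : M3 k n := fun p q =>
  R (p.1, p.2.2) (q.1, q.2.2) * (if p.2.1 = q.2.1 then 1 else 0)

/-- `R₂₃ = id ⊗ R`. -/
def lift23 (R : M2 k n) : M3 k n := fun p q =>
  R (p.2.1, p.2.2) (q.2.1, q.2.2) * (if p.1 = q.1 then 1 else 0)

/-- The generator `tⁱⱼ` of the free algebra on `n²` matrix generators. -/
noncomputable def X (p : Fin n × Fin n) : FreeAlgebra k (Fin n × Fin n) :=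
  FreeAlgebra.ι k p

/-- The FRT relations `Rⁱₐʲᵦ tᵃₖ tᵇₗ = tʲᵦ tⁱₐ Rᵃₖᵇₗ` of the matrix bialgebra `A(R)`. -/
inductive ARrel (R : M2 k n) :
    FreeAlgebra k (Fin n × Fin n) → FreeAlgebra k (Fin n × Fin n) → Prop
  | rel (i j kk l : Fin n) : ARrel R
      (∑ a : Fin n, ∑ b : Fin n, R (i, j) (a, b) • (X k n (a, kk) * X k n (b, l)))
      (∑ a : Fin n, ∑ b : Fin n, R (a, b) (kk, l) • (X k n (j, b) * X k n (i, a)))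

/-- The matrix bialgebra `A(R)` (here just as an algebra), given by generators `tⁱⱼ`
and the FRT relations. -/
noncomputable abbrev AR (R : M2 k n) := RingQuot (ARrel k n R)

/- ### Auxiliary lemmas -/

lemma lift12_mul (A B : M2 k n) : lift12 k n (A * B) = lift12 k n A * lift12 k n B := by
  ext p q
  simp [lift12, Matrix.mul_apply, Fintype.sum_prod_type, mul_ite, ite_mul,
    Finset.sum_mul, Finset.mul_sum]

lemma lift13_mul (A B : M2 k n) : lift13 k n (A * B) = lift13 k n A * lift13 k n B := by
  ext p q
  simp [lift13, Matrix.mul_apply, Fintype.sum_prod_type, mul_ite, ite_mul,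
    Finset.sum_mul, Finset.mul_sum]

lemma lift23_mul (A B : M2 k n) : lift23 k n (A * B) = lift23 k n A * lift23 k n B := by
  ext p q
  simp [lift23, Matrix.mul_apply, Fintype.sum_prod_type, mul_ite, ite_mul,
    Finset.sum_mul, Finset.mul_sum]

lemma lift12_one : lift12 k n 1 = 1 := by
  ext p q
  simp [lift12, Matrix.one_apply, Prod.ext_iff]
  aesop

lemma lift13_one : lift13 k n 1 = 1 := by
  ext p q
  simp [lift13, Matrix.one_apply, Prod.ext_iff]
  aesop

lemma lift23_one : lift23 k n 1 = 1 := by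
  ext p q
  simp [lift23, Matrix.one_apply, Prod.ext_iff]
  aesop

lemma rot {α : Type} [AddCommMonoid α] (f : Fin n → Fin n → Fin n → α) :
    ∑ a : Fin n, ∑ b : Fin n, ∑ c : Fin n, f a b c
      = ∑ b : Fin n, ∑ c : Fin n, ∑ a : Fin n, f a b c := by
  rw [Finset.sum_comm]
  exact Finset.sum_congr rfl fun _ _ => Finset.sum_comm

lemma rot2 {α : Type} [AddCommMonoid α] (f : Fin n → Fin n → Fin n → α) :
    ∑ a : Fin n, ∑ b : Fin n, ∑ c : Fin n, f a b c
      = ∑ c : Fin n, ∑ b : Fin n, ∑ a : Fin n, f a b c := by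
  calc ∑ a : Fin n, ∑ b : Fin n, ∑ c : Fin n, f a b c
      = ∑ a : Fin n, ∑ c : Fin n, ∑ b : Fin n, f a b c :=
        Finset.sum_congr rfl fun _ _ => Finset.sum_comm
    _ = ∑ c : Fin n, ∑ a : Fin n, ∑ b : Fin n, f a b c := Finset.sum_comm
    _ = ∑ c : Fin n, ∑ b : Fin n, ∑ a : Fin n, f a b c :=
        Finset.sum_congr rfl fun _ _ => Finset.sum_comm

/-- Scalar form of the QYBE, as needed for `ρ⁺`. -/
lemma key_plus (R : M2 k n)
    (hqybe : lift12 k n R * lift13 k n R * lift23 k n R =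
      lift23 k n R * lift13 k n R * lift12 k n R) (i j kk l x y : Fin n) :
    ∑ a : Fin n, ∑ b : Fin n, R (i, j) (a, b) * (∑ c : Fin n, R (a, x) (kk, c) * R (b, c) (l, y))
      = ∑ a : Fin n, ∑ b : Fin n,
          R (a, b) (kk, l) * (∑ c : Fin n, R (j, x) (b, c) * R (i, c) (a, y)) := by
  have h := congrFun (congrFun hqybe (i, j, x)) (kk, l, y)
  simp [lift12, lift13, lift23, Matrix.mul_apply, Fintype.sum_prod_type, mul_ite, ite_mul] at h
  calc ∑ a : Fin n, ∑ b : Fin n,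
        R (i, j) (a, b) * (∑ c : Fin n, R (a, x) (kk, c) * R (b, c) (l, y))
      = ∑ b : Fin n, ∑ c : Fin n,
          (∑ a : Fin n, R (i, j) (a, b) * R (a, x) (kk, c)) * R (b, c) (l, y) := by
        simp only [Finset.mul_sum, Finset.sum_mul]
        rw [rot n (fun a b c => R (i, j) (a, b) * (R (a, x) (kk, c) * R (b, c) (l, y)))]
        exact Finset.sum_congr rfl fun _ _ => Finset.sum_congr rfl fun _ _ =>
          Finset.sum_congr rfl fun _ _ => by ring
    _ = ∑ a : Fin n, ∑ b : Fin n,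
          (∑ c : Fin n, R (j, x) (b, c) * R (i, c) (a, y)) * R (a, b) (kk, l) := h
    _ = ∑ a : Fin n, ∑ b : Fin n,
          R (a, b) (kk, l) * (∑ c : Fin n, R (j, x) (b, c) * R (i, c) (a, y)) :=
        Finset.sum_congr rfl fun _ _ => Finset.sum_congr rfl fun _ _ => mul_comm _ _

/-- Scalar form of the conjugated QYBE, as needed for `ρ⁻`. -/
lemma key_minus (R Rinv : M2 k n)
    (hG : lift23 k n R * lift12 k n Rinv * lift13 k n Rinv =
      lift13 k n Rinv * lift12 k n Rinv * lift23 k n R) (i j kk l x y : Fin n) :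
    ∑ a : Fin n, ∑ b : Fin n,
        R (i, j) (a, b) * (∑ c : Fin n, Rinv (x, a) (c, kk) * Rinv (c, b) (y, l))
      = ∑ a : Fin n, ∑ b : Fin n,
          R (a, b) (kk, l) * (∑ c : Fin n, Rinv (x, j) (c, b) * Rinv (c, i) (y, a)) := by
  have h := congrFun (congrFun hG (x, i, j)) (y, kk, l)
  simp [lift12, lift13, lift23, Matrix.mul_apply, Fintype.sum_prod_type, mul_ite, ite_mul] at h
  calc ∑ a : Fin n, ∑ b : Fin n,
        R (i, j) (a, b) * (∑ c : Fin n, Rinv (x, a) (c, kk) * Rinv (c, b) (y, l))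
      = ∑ c : Fin n, ∑ b : Fin n,
          (∑ a : Fin n, R (i, j) (a, b) * Rinv (x, a) (c, kk)) * Rinv (c, b) (y, l) := by
        simp only [Finset.mul_sum, Finset.sum_mul]
        rw [rot2 n (fun a b c => R (i, j) (a, b) * (Rinv (x, a) (c, kk) * Rinv (c, b) (y, l)))]
        exact Finset.sum_congr rfl fun _ _ => Finset.sum_congr rfl fun _ _ =>
          Finset.sum_congr rfl fun _ _ => by ring
    _ = ∑ a : Fin n, ∑ b : Fin n,
          (∑ c : Fin n, Rinv (x, j) (c, b) * Rinv (c, i) (y, a)) * R (a, b) (kk, l) := h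
    _ = ∑ a : Fin n, ∑ b : Fin n,
          R (a, b) (kk, l) * (∑ c : Fin n, Rinv (x, j) (c, b) * Rinv (c, i) (y, a)) :=
        Finset.sum_congr rfl fun _ _ => Finset.sum_congr rfl fun _ _ => mul_comm _ _

/-- Monoid manipulation: conjugating the QYBE by inverses. -/
lemma conj {M : Type} [Monoid M] (A B C A' B' : M)
    (hA : A * A' = 1) (hA' : A' * A = 1) (hB : B * B' = 1) (hB' : B' * B = 1)
    (h : A * B * C = C * B * A) :
    C * A' * B' = B' * A' * C := by
  have cA : ∀ X : M, A' * (A * X) = X := fun X => by rw [← mul_assoc, hA', one_mul]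
  have cB : ∀ X : M, B' * (B * X) = X := fun X => by rw [← mul_assoc, hB', one_mul]
  have cA2 : ∀ X : M, A * (A' * X) = X := fun X => by rw [← mul_assoc, hA, one_mul]
  have h2 := congrArg (fun M => B' * (A' * (M * (A' * B')))) h
  simp only [mul_assoc] at h2 ⊢
  rw [cA, cB, cA2, hB, mul_one] at h2
  exact h2

/-- if `R ∈ Mₙ(k) ⊗ Mₙ(k)` is an invertible solution of the QYBE
`R₁₂R₁₃R₂₃ = R₂₃R₁₃R₁₂`, then `A(R)` admits two algebra representations
`ρ⁺, ρ⁻ : A(R) → Mₙ(k)` with `ρ⁺(tⁱⱼ)ᵏₗ = Rⁱⱼᵏₗ` and `ρ⁻(tⁱⱼ)ᵏₗ = (R⁻¹)ᵏₗⁱⱼ`. -/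
theorem AR_has_fundamental_representations (R Rinv : M2 k n)
    (hR : R * Rinv = 1) (hR' : Rinv * R = 1)
    (hqybe : lift12 k n R * lift13 k n R * lift23 k n R =
      lift23 k n R * lift13 k n R * lift12 k n R) :
    (∃ ρp : AR k n R →ₐ[k] Matrix (Fin n) (Fin n) k,
      ∀ i j : Fin n, ρp (RingQuot.mkAlgHom k (ARrel k n R) (X k n (i, j))) =
        Matrix.of fun kk l => R (i, kk) (j, l)) ∧
    (∃ ρm : AR k n R →ₐ[k] Matrix (Fin n) (Fin n) k,
      ∀ i j : Fin n, ρm (RingQuot.mkAlgHom k (ARrel k n R) (X k n (i, j))) =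
        Matrix.of fun kk l => Rinv (kk, i) (l, j)) := by
  constructor
  · -- ρ⁺
    set f : Fin n × Fin n → Matrix (Fin n) (Fin n) k :=
      fun p => Matrix.of fun x y => R (p.1, x) (p.2, y) with hf
    have hrel : ∀ ⦃a b : FreeAlgebra k (Fin n × Fin n)⦄, ARrel k n R a b →
        (FreeAlgebra.lift k f) a = (FreeAlgebra.lift k f) b := by
      rintro _ _ ⟨i, j, kk, l⟩
      simp only [map_sum, map_smul, map_mul, X, FreeAlgebra.lift_ι_apply]
      ext x y
      simp only [Matrix.sum_apply, Matrix.smul_apply, Matrix.mul_apply, hf,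
        Matrix.of_apply, smul_eq_mul]
      exact key_plus k n R hqybe i j kk l x y
    refine ⟨RingQuot.liftAlgHom k ⟨FreeAlgebra.lift k f, hrel⟩, fun i j => ?_⟩
    rw [RingQuot.liftAlgHom_mkAlgHom_apply]
    simp [X, hf]
  · -- ρ⁻
    have hG : lift23 k n R * lift12 k n Rinv * lift13 k n Rinv =
        lift13 k n Rinv * lift12 k n Rinv * lift23 k n R := by
      apply conj (lift12 k n R) (lift13 k n R) (lift23 k n R)
      · rw [← lift12_mul, hR, lift12_one]
      · rw [← lift12_mul, hR', lift12_one]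
      · rw [← lift13_mul, hR, lift13_one]
      · rw [← lift13_mul, hR', lift13_one]
      · exact hqybe
    set f : Fin n × Fin n → Matrix (Fin n) (Fin n) k :=
      fun p => Matrix.of fun x y => Rinv (x, p.1) (y, p.2) with hf
    have hrel : ∀ ⦃a b : FreeAlgebra k (Fin n × Fin n)⦄, ARrel k n R a b →
        (FreeAlgebra.lift k f) a = (FreeAlgebra.lift k f) b := by
      rintro _ _ ⟨i, j, kk, l⟩
      simp only [map_sum, map_smul, map_mul, X, FreeAlgebra.lift_ι_apply]
      ext x y
      simp only [Matrix.sum_apply, Matrix.smul_apply, Matrix.mul_apply, hf,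
        Matrix.of_apply, smul_eq_mul]
      exact key_minus k n R Rinv hG i j kk l x y
    refine ⟨RingQuot.liftAlgHom k ⟨FreeAlgebra.lift k f, hrel⟩, fun i j => ?_⟩
    rw [RingQuot.liftAlgHom_mkAlgHom_apply]
    simp [X, hf]

end Stmt10
end
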